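/- Let C be an E-linear code. Then the two-sided symplectic hull SHull(C) = C ∩ C^{⊥_S} satisfies (SHull(C))_Res = C_Res ∩ (C_Tor)^{⊥_S} and (SHull(C))_Tor = (C_Res)^{⊥_S} ∩ C_Tor. -/

import Mathlib

open Finset

/-- The non-unital ring `E`, realized as pairs `(u, v) ∈ F₂ × F₂`
representing `uκ + vζ`. -/
def Ering : Type := (ZMod 2) × (ZMod 2)

namespace Ering

instance : AddCommGroup Ering := inferInstanceAs (AddCommGroup ((ZMod 2) × (ZMod 2)))
instance : DecidableEq Ering := inferInstanceAs (DecidableEq ((ZMod 2) × (ZMod 2)))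
instance : Fintype Ering := inferInstanceAs (Fintype ((ZMod 2) × (ZMod 2)))

instance : Mul Ering := ⟨fun a b => (a.1 * b.1, a.2 * b.1)⟩

instance : NonUnitalRing Ering :=
  { (inferInstance : AddCommGroup Ering), (inferInstance : Mul Ering) with
    left_distrib := by decide
    right_distrib := by decide
    zero_mul := by decide
    mul_zero := by decide
    mul_assoc := by decide }

/-- The generator κ. -/
def kappa : Ering := ((1 : ZMod 2), (0 : ZMod 2))
/-- The generator τ. -/
def tau : Ering := ((1 : ZMod 2), (1 : ZMod 2))
/-- ζ = κ + τ. -/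
def zeta : Ering := ((0 : ZMod 2), (1 : ZMod 2))

/-- The scalar action of `F₂` on `E`: `u • e = e` if `u = 1`, else `0`. -/
def fsmul (u : ZMod 2) (e : Ering) : Ering := if u = 1 then e else 0

/-- `E`-vectors of length `2n`, written as a pair `(u | v)` of halves of length `n`. -/
abbrev VE (n : ℕ) := (Fin n → Ering) × (Fin n → Ering)

/-- `F₂`-vectors of length `2n`, written as a pair of halves of length `n`. -/
abbrev VF (n : ℕ) := (Fin n → ZMod 2) × (Fin n → ZMod 2)

/-- Symplectic inner product on `E^{2n}`: `⟨(u|v),(u'|v')⟩ₛ = ⟨u,v'⟩ + ⟨v,u'⟩`. -/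
def sympE {n : ℕ} (x y : VE n) : Ering := ∑ i, x.1 i * y.2 i + ∑ i, x.2 i * y.1 i

/-- Symplectic inner product on `F₂^{2n}`. -/
def sympF {n : ℕ} (x y : VF n) : ZMod 2 := ∑ i, x.1 i * y.2 i + ∑ i, x.2 i * y.1 i

/-- An `E`-linear code: a left `E`-submodule of `E^{2n}`. -/
def IsLinearCode {n : ℕ} (C : Set (VE n)) : Prop :=
  (0 : VE n) ∈ C ∧ (∀ x ∈ C, ∀ y ∈ C, x + y ∈ C) ∧
    (∀ e : Ering, ∀ x ∈ C, ((fun i => e * x.1 i, fun i => e * x.2 i) : VE n) ∈ C)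

/-- Componentwise reduction `π : E^{2n} → F₂^{2n}`, `π(uκ + vζ) = u`. -/
def resVec {n : ℕ} (x : VE n) : VF n := (fun i => (x.1 i).1, fun i => (x.2 i).1)

/-- For `e ∈ E` and `v ∈ F₂^{2n}`, the vector `ev ∈ E^{2n}` with entries `vᵢ • e`. -/
def evec {n : ℕ} (e : Ering) (v : VF n) : VE n :=
  (fun i => fsmul (v.1 i) e, fun i => fsmul (v.2 i) e)

/-- The residue code `C_Res = π(C)`. -/
def resCode {n : ℕ} (C : Set (VE n)) : Set (VF n) := resVec '' C

/-- The torsion code `C_Tor = {v : ζv ∈ C}`. -/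
def torCode {n : ℕ} (C : Set (VE n)) : Set (VF n) := {v | evec zeta v ∈ C}

/-- The left symplectic dual. -/
def leftDual {n : ℕ} (C : Set (VE n)) : Set (VE n) := {z | ∀ w ∈ C, sympE z w = 0}

/-- The right symplectic dual. -/
def rightDual {n : ℕ} (C : Set (VE n)) : Set (VE n) := {z | ∀ w ∈ C, sympE w z = 0}

/-- The two-sided symplectic dual. -/
def dual {n : ℕ} (C : Set (VE n)) : Set (VE n) := leftDual C ∩ rightDual C

/-- The binary symplectic dual of `D ⊆ F₂^{2n}`. -/
def dualF {n : ℕ} (D : Set (VF n)) : Set (VF n) := {z | ∀ w ∈ D, sympF z w = 0}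

/-- The two-sided symplectic hull. -/
def SHull {n : ℕ} (C : Set (VE n)) : Set (VE n) := C ∩ dual C

/-- The left symplectic hull. -/
def LSHull {n : ℕ} (C : Set (VE n)) : Set (VE n) := C ∩ leftDual C

/-- The right symplectic hull. -/
def RSHull {n : ℕ} (C : Set (VE n)) : Set (VE n) := C ∩ rightDual C

/-- Symplectic hull of a binary code. -/
def SHullF {n : ℕ} (D : Set (VF n)) : Set (VF n) := D ∩ dualF D

/-- A free `E`-linear code: residue and torsion codes coincide. -/
def IsFree {n : ℕ} (C : Set (VE n)) : Prop := resCode C = torCode C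

end Ering

/-! In the coordinates `x = κa + ζb`, a linear code is a product, `C = C_Res × C_Tor`, and so is
its dual, `C^{⊥_S} = (C_Tor)^{⊥_S} × (C_Res)^{⊥_S}`. The hull is therefore the product of the two
intersections, and its residue and torsion codes are the two factors. -/

namespace Ering

variable {n : ℕ}

def sndVec (x : VE n) : VF n := (fun i => (x.1 i).2, fun i => (x.2 i).2)

def esmul (e : Ering) (x : VE n) : VE n := (fun i => e * x.1 i, fun i => e * x.2 i)

/-- Coordinates of `x = κa + ζb` in the `F₂`-basis `(κ, ζ)`. -/
def coords : VE n ≃+ VF n × VF n where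
  toFun x := (resVec x, sndVec x)
  invFun p := (fun i => (p.1.1 i, p.2.1 i), fun i => (p.1.2 i, p.2.2 i))
  left_inv _ := rfl
  right_inv _ := rfl
  map_add' _ _ := rfl

lemma coords_fst (x : VE n) : (coords x).1 = resVec x := rfl

lemma coords_snd (x : VE n) : (coords x).2 = sndVec x := rfl

lemma coords_evec_zeta (v : VF n) : coords (evec zeta v) = (0, v) := by
  have h : ∀ u : ZMod 2, (fsmul u zeta).1 = 0 ∧ (fsmul u zeta).2 = u := by decide
  ext i <;> simp [coords, resVec, sndVec, evec, h]

lemma coords_esmul_kappa (x : VE n) : coords (esmul kappa x) = (resVec x, 0) := by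
  have h : ∀ e : Ering, (kappa * e).1 = e.1 ∧ (kappa * e).2 = 0 := by decide
  ext i <;> simp [coords, resVec, sndVec, esmul, h]

lemma coords_esmul_zeta (x : VE n) : coords (esmul zeta x) = (0, resVec x) := by
  have h : ∀ e : Ering, (zeta * e).1 = 0 ∧ (zeta * e).2 = e.1 := by decide
  ext i <;> simp [coords, resVec, sndVec, esmul, h]

lemma coords_add_esmul_kappa (x : VE n) : coords (x + esmul kappa x) = (0, sndVec x) := by
  have h : ∀ e : Ering, (e + kappa * e).1 = 0 ∧ (e + kappa * e).2 = e.2 := by decide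
  ext i <;> simp [coords, resVec, sndVec, esmul, h]

lemma mem_torCode_iff {C : Set (VE n)} {v : VF n} : v ∈ torCode C ↔ coords.symm (0, v) ∈ C := by
  rw [← coords_evec_zeta, AddEquiv.symm_apply_apply]; rfl

lemma sympE_eq (x y : VE n) :
    sympE x y = (sympF (resVec x) (resVec y), sympF (sndVec x) (resVec y)) := by
  have sum_eq (f : Fin n → Ering) : ∑ i, f i = (∑ i, (f i).1, ∑ i, (f i).2) :=
    Prod.ext Prod.fst_sum Prod.snd_sum
  simp only [sympE, sympF, sum_eq, resVec, sndVec]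
  rfl

lemma sympF_comm (x y : VF n) : sympF x y = sympF y x := by
  simp only [sympF, mul_comm (x.1 _), mul_comm (x.2 _)]
  exact add_comm _ _

lemma sympF_zero_left (y : VF n) : sympF 0 y = 0 := by
  simp [sympF]

lemma zero_mem_dualF (D : Set (VF n)) : 0 ∈ dualF D := fun _ _ ↦ sympF_zero_left _

lemma dualF_anti {D D' : Set (VF n)} (h : D ⊆ D') : dualF D' ⊆ dualF D :=
  fun _ hz w hw ↦ hz w (h hw)

lemma sympE_eq_zero_iff (x y : VE n) :
    sympE x y = 0 ↔ sympF (resVec x) (resVec y) = 0 ∧ sympF (sndVec x) (resVec y) = 0 := by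
  rw [sympE_eq]
  exact Prod.mk_eq_zero

lemma mem_leftDual_iff {C : Set (VE n)} {z : VE n} :
    z ∈ leftDual C ↔ coords z ∈ dualF (resCode C) ×ˢ dualF (resCode C) := by
  simp only [leftDual, dualF, resCode, Set.mem_ofPred_eq, sympE_eq_zero_iff, Set.forall_mem_image,
    Set.mem_prod, coords_fst, coords_snd]
  exact forall₂_and

lemma resCode_preimage_prod {A B : Set (VF n)} (hB : B.Nonempty) :
    resCode (coords ⁻¹' (A ×ˢ B)) = A := by
  change (Prod.fst ∘ coords) '' _ = A
  rw [Set.image_comp, coords.surjective.image_preimage, Set.fst_image_prod _ hB]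

lemma torCode_preimage_prod {A B : Set (VF n)} (hA : 0 ∈ A) :
    torCode (coords ⁻¹' (A ×ˢ B)) = B := by
  ext v
  rw [mem_torCode_iff, Set.mem_preimage, AddEquiv.apply_symm_apply]
  simp [hA]

namespace IsLinearCode

variable {C : Set (VE n)}

lemma esmul_mem (hC : IsLinearCode C) {x : VE n} (hx : x ∈ C) (e : Ering) : esmul e x ∈ C :=
  hC.2.2 e x hx

lemma zero_mem_resCode (hC : IsLinearCode C) : 0 ∈ resCode C := ⟨0, hC.1, rfl⟩

lemma zero_mem_torCode (hC : IsLinearCode C) : 0 ∈ torCode C := by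
  rw [mem_torCode_iff, Prod.mk_zero_zero, map_zero]
  exact hC.1

lemma resVec_mem_torCode (hC : IsLinearCode C) {x : VE n} (hx : x ∈ C) :
    resVec x ∈ torCode C := by
  rw [mem_torCode_iff, ← coords_esmul_zeta, AddEquiv.symm_apply_apply]
  exact hC.esmul_mem hx zeta

lemma sndVec_mem_torCode (hC : IsLinearCode C) {x : VE n} (hx : x ∈ C) :
    sndVec x ∈ torCode C := by
  rw [mem_torCode_iff, ← coords_add_esmul_kappa, AddEquiv.symm_apply_apply]
  exact hC.2.1 x hx _ (hC.esmul_mem hx kappa)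

lemma resCode_subset_torCode (hC : IsLinearCode C) : resCode C ⊆ torCode C := by
  rintro _ ⟨x, hx, rfl⟩
  exact hC.resVec_mem_torCode hx

/-- The structure theorem `C = κ C_Res ⊕ ζ C_Tor`. -/
lemma eq_preimage_prod (hC : IsLinearCode C) : C = coords ⁻¹' (resCode C ×ˢ torCode C) := by
  ext x
  refine ⟨fun hx ↦ ⟨⟨x, hx, rfl⟩, hC.sndVec_mem_torCode hx⟩, ?_⟩
  rintro ⟨⟨y, hy, hyx⟩, hx⟩
  have hsplit : x = esmul kappa y + coords.symm (0, sndVec x) := by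
    apply coords.injective
    rw [map_add, coords_esmul_kappa, AddEquiv.apply_symm_apply, hyx]
    exact Prod.ext (add_zero _).symm (zero_add _).symm
  rw [hsplit]
  exact hC.2.1 _ (hC.esmul_mem hy kappa) _ (mem_torCode_iff.1 hx)

lemma mem_rightDual_iff (hC : IsLinearCode C) {z : VE n} :
    z ∈ rightDual C ↔ resVec z ∈ dualF (torCode C) := by
  refine ⟨fun hz v hv ↦ ?_, fun hz w hw ↦ ?_⟩
  · have h := ((sympE_eq_zero_iff _ _).1 (hz _ (mem_torCode_iff.1 hv))).2
    rwa [← coords_snd, AddEquiv.apply_symm_apply, sympF_comm] at h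
  · rw [sympE_eq_zero_iff, sympF_comm, sympF_comm (sndVec w)]
    exact ⟨hz _ (hC.resVec_mem_torCode hw), hz _ (hC.sndVec_mem_torCode hw)⟩

/-- `C^{⊥_S} = κ (C_Tor)^{⊥_S} ⊕ ζ (C_Res)^{⊥_S}`. -/
lemma dual_eq_preimage_prod (hC : IsLinearCode C) :
    dual C = coords ⁻¹' (dualF (torCode C) ×ˢ dualF (resCode C)) := by
  ext z
  rw [dual, Set.mem_inter_iff, mem_leftDual_iff, hC.mem_rightDual_iff]
  simp only [Set.mem_preimage, Set.mem_prod, coords_fst, coords_snd]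
  exact ⟨fun h ↦ ⟨h.2, h.1.2⟩,
    fun h ↦ ⟨⟨dualF_anti hC.resCode_subset_torCode h.1, h.2⟩, h.1⟩⟩

lemma SHull_eq_preimage_prod (hC : IsLinearCode C) :
    SHull C = coords ⁻¹'
      ((resCode C ∩ dualF (torCode C)) ×ˢ (torCode C ∩ dualF (resCode C))) := by
  rw [SHull, hC.dual_eq_preimage_prod, ← Set.prod_inter_prod, Set.preimage_inter,
    ← hC.eq_preimage_prod]

end IsLinearCode

end Ering

open Ering
/-- `(SHull C)_Res = C_Res ∩ (C_Tor)^{⊥_S}` and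
`(SHull C)_Tor = (C_Res)^{⊥_S} ∩ C_Tor`. -/
theorem Ering.shull_res_tor {n : ℕ} (C : Set (VE n)) (hC : IsLinearCode C) :
    resCode (SHull C) = resCode C ∩ dualF (torCode C) ∧
    torCode (SHull C) = dualF (resCode C) ∩ torCode C := by
  rw [hC.SHull_eq_preimage_prod, Set.inter_comm (dualF _)]
  exact ⟨resCode_preimage_prod ⟨0, hC.zero_mem_torCode, zero_mem_dualF _⟩,
    torCode_preimage_prod ⟨hC.zero_mem_resCode, zero_mem_dualF _⟩⟩
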